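/- Suppose in addition that L_k ≤ 2 L_f for all k ≥ 1, for some L_f > 0, and let x* ∈ Q be a minimizer of φ over Q. Then for every T ≥ 1 the iterates satisfy φ(y_T) − φ(x*) ≤ 4 L_f R² / T², where R² := 2 V_{z_0}(x*). -/

import Mathlib

/-!
The potential `A k * (φ (y k) - φ x*) + V (z k) x*` is nonincreasing. In one step, `y (k+1)` is
compared with the point `τ z (k+1) + (1 - τ) y k`, whose distance to `x (k+1)` is
`τ ‖z (k+1) - z k‖`; the quadratic term this produces is absorbed by the three-point inequality
of the mirror step `z (k+1)`, and the linear terms are closed by convexity of `f` at `x (k+1)`,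
thanks to the coupling `α (k+1) (x (k+1) - z k) = A k (y k - x (k+1))`. The weights satisfy
`A (k+1) = A k + α (k+1) = α (k+1)² L (k+1)`, so `√(A k)` grows by at least `1 / (2 √(2 L_f))`
per step and `A T ≥ T² / (8 L_f)`.
-/

open RealInnerProductSpace Filter Set

section LineDeriv

variable {E : Type*} [AddCommGroup E] [Module ℝ E] {Q : Set E}

theorem ConvexOn.add_le_of_hasLineDerivAt {F : E → ℝ} {x v : E} {c : ℝ}
    (hF : ConvexOn ℝ Q F) (hx : x ∈ Q) (hv : v ∈ Q) (hc : HasLineDerivAt ℝ F c x (v - x)) :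
    F x + c ≤ F v := by
  suffices c ≤ F v - F x by linarith
  refine le_of_tendsto hc.tendsto_slope_zero_right ?_
  filter_upwards [Ioc_mem_nhdsGT zero_lt_one] with t ⟨ht0, ht1⟩
  have hseg : F (x + t • (v - x)) ≤ (1 - t) * F x + t * F v := by
    rw [show x + t • (v - x) = (1 - t) • x + t • v by module]
    exact hF.2 hx hv (by linarith) ht0.le (by ring)
  rw [smul_eq_mul, inv_mul_le_iff₀ ht0]
  linarith

theorem IsMinOn.hasLineDerivAt_add_sub_nonneg {h Ψ : E → ℝ} {p u : E} {c : ℝ}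
    (hmin : IsMinOn (fun v => h v + Ψ v) Q p) (hQ : Convex ℝ Q) (hΨ : ConvexOn ℝ Q Ψ)
    (hp : p ∈ Q) (hu : u ∈ Q) (hc : HasLineDerivAt ℝ h c p (u - p)) :
    0 ≤ c + Ψ u - Ψ p := by
  suffices Ψ p - Ψ u ≤ c by linarith
  refine ge_of_tendsto hc.tendsto_slope_zero_right ?_
  filter_upwards [Ioc_mem_nhdsGT zero_lt_one] with t ⟨ht0, ht1⟩
  have hseg : p + t • (u - p) = (1 - t) • p + t • u := by module
  have hmem : p + t • (u - p) ∈ Q := hseg ▸ hQ hp hu (by linarith) ht0.le (by ring)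
  have hΨseg : Ψ (p + t • (u - p)) ≤ (1 - t) * Ψ p + t * Ψ u :=
    hseg ▸ hΨ.2 hp hu (by linarith) ht0.le (by ring)
  have := isMinOn_iff.1 hmin _ hmem
  rw [smul_eq_mul, le_inv_mul_iff₀ ht0]
  linarith

end LineDeriv

section Bregman

variable {H : Type*} [NormedAddCommGroup H] [InnerProductSpace ℝ H]

theorem HasGradientAt.hasLineDerivAt [CompleteSpace H] {F : H → ℝ} {g x : H}
    (hF : HasGradientAt F g x) (d : H) : HasLineDerivAt ℝ F ⟪g, d⟫ x d :=
  hF.hasFDerivAt.hasLineDerivAt d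

def bregman (ω : H → ℝ) (ω' : H → H) (a b : H) : ℝ := ω b - ω a - ⟪ω' a, b - a⟫

theorem bregman_three_point (ω : H → ℝ) (ω' : H → H) (a b u : H) :
    bregman ω ω' a u - bregman ω ω' b u - bregman ω ω' a b = ⟪ω' b - ω' a, u - b⟫ := by
  simp only [bregman, inner_sub_left, inner_sub_right]
  ring

theorem hasLineDerivAt_bregman_prox [CompleteSpace H] {ω : H → ℝ} {ω' : H → H} {g z p d : H}
    (a : ℝ) (hω : HasGradientAt ω (ω' p) p) :
    HasLineDerivAt ℝ (fun v => ⟪g, v - z⟫ + 1 / a * bregman ω ω' z v)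
      (⟪g, d⟫ + 1 / a * ⟪ω' p - ω' z, d⟫) p d := by
  have hω' : HasDerivAt (fun t : ℝ => ω (p + t • d)) ⟪ω' p, d⟫ 0 := by
    simpa [HasLineDerivAt] using hω.hasLineDerivAt d
  have hlin (w : H) : HasDerivAt (fun t : ℝ => ⟪w, p - z⟫ + t * ⟪w, d⟫) ⟪w, d⟫ 0 := by
    simpa using ((hasDerivAt_id (0 : ℝ)).mul_const ⟪w, d⟫).const_add ⟪w, p - z⟫
  have := (hlin g).add (((hω'.sub_const (ω z)).sub (hlin (ω' z))).const_mul (1 / a))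
  unfold HasLineDerivAt
  convert this using 2 with t
  · simp only [bregman, Pi.add_apply, Pi.sub_apply, inner_sub_right, inner_add_right,
      inner_smul_right]
    ring
  · rw [inner_sub_left]

theorem IsMinOn.bregman_prox_three_point [CompleteSpace H] {Q : Set H} {Ψ ω : H → ℝ}
    {ω' : H → H} {g z p u : H} {a : ℝ}
    (hmin : IsMinOn (fun v => ⟪g, v - z⟫ + 1 / a * bregman ω ω' z v + Ψ v) Q p)
    (hQ : Convex ℝ Q) (hΨ : ConvexOn ℝ Q Ψ) (hp : p ∈ Q) (hu : u ∈ Q)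
    (hω : HasGradientAt ω (ω' p) p) (ha : 0 < a) :
    a * (⟪g, p - u⟫ + Ψ p - Ψ u) + bregman ω ω' z p + bregman ω ω' p u ≤ bregman ω ω' z u := by
  have hvar := hmin.hasLineDerivAt_add_sub_nonneg hQ hΨ hp hu (hasLineDerivAt_bregman_prox a hω)
  have hvar' : 0 ≤ a * (⟪g, u - p⟫ + 1 / a * ⟪ω' p - ω' z, u - p⟫ + Ψ u - Ψ p) :=
    mul_nonneg ha.le hvar
  field_simp at hvar'
  have hneg : ⟪g, p - u⟫ = -⟪g, u - p⟫ := by rw [← inner_neg_right, neg_sub]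
  linear_combination hvar' - bregman_three_point ω ω' z p u + a * hneg

end Bregman

section Step

variable {H : Type*} [NormedAddCommGroup H] [InnerProductSpace ℝ H]

theorem IsMinOn.gradient_step_le_comparison {Q : Set H} {f Ψ : H → ℝ} {g x' y y' z z' : H}
    {ℓ τ : ℝ} (hmin : IsMinOn (fun v => ⟪g, v - x'⟫ + ℓ / 2 * ‖v - x'‖ ^ 2 + Ψ v) Q y')
    (hQ : Convex ℝ Q) (hΨ : ConvexOn ℝ Q Ψ) (hτ0 : 0 ≤ τ) (hτ1 : τ ≤ 1)
    (hx' : x' = τ • z + (1 - τ) • y) (hy : y ∈ Q) (hz' : z' ∈ Q)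
    (hdesc : f y' ≤ f x' + ⟪g, y' - x'⟫ + ℓ / 2 * ‖y' - x'‖ ^ 2) :
    f y' + Ψ y' ≤ f x' + τ * ⟪g, z' - z⟫ + ℓ / 2 * τ ^ 2 * ‖z' - z‖ ^ 2
      + τ * Ψ z' + (1 - τ) * Ψ y := by
  have hv : τ • z' + (1 - τ) • y - x' = τ • (z' - z) := by rw [hx']; module
  have hτ1' : 0 ≤ 1 - τ := by linarith
  have hvQ : τ • z' + (1 - τ) • y ∈ Q := hQ hz' hy hτ0 hτ1' (by ring)
  have hΨv := hΨ.2 hz' hy hτ0 hτ1' (by ring)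
  have hcomp := isMinOn_iff.1 hmin _ hvQ
  simp only [hv, inner_smul_right, norm_smul, mul_pow, Real.norm_eq_abs, sq_abs,
    smul_eq_mul] at hcomp hΨv
  linarith

theorem smul_sub_eq_smul_sub_of_sq_mul_eq {x' y z : H} {A a ℓ τ : ℝ} (ha : 0 < a) (hℓ : 0 < ℓ)
    (hquad : a ^ 2 * ℓ = A + a) (hτ : τ = 1 / (a * ℓ)) (hx' : x' = τ • z + (1 - τ) • y) :
    a • (x' - z) = A • (y - x') := by
  have hscalar : a * (1 - τ) = A * τ := by
    rw [hτ, show A = a ^ 2 * ℓ - a by linarith]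
    field_simp
  rw [hx', show τ • z + (1 - τ) • y - z = (1 - τ) • (y - z) by module,
    show y - (τ • z + (1 - τ) • y) = τ • (y - z) by module, smul_smul, smul_smul, hscalar]

theorem potential_succ_le [CompleteSpace H] {Q : Set H} {f Ψ ω : H → ℝ} {ω' : H → H}
    (hQ : Convex ℝ Q) (hf : ConvexOn ℝ Q f) (hΨ : ConvexOn ℝ Q Ψ)
    {g x' y y' z z' u : H} {A a ℓ τ : ℝ}
    (hℓ : 0 < ℓ) (hA : 0 ≤ A) (haℓ : 1 ≤ a * ℓ) (hquad : a ^ 2 * ℓ = A + a)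
    (hτ : τ = 1 / (a * ℓ)) (hx' : x' = τ • z + (1 - τ) • y)
    (hy : y ∈ Q) (hz : z ∈ Q) (hz' : z' ∈ Q) (hu : u ∈ Q)
    (hg : HasGradientAt f g x') (hω : HasGradientAt ω (ω' z') z')
    (hy'min : IsMinOn (fun v => ⟪g, v - x'⟫ + ℓ / 2 * ‖v - x'‖ ^ 2 + Ψ v) Q y')
    (hz'min : IsMinOn (fun v => ⟪g, v - z⟫ + 1 / a * bregman ω ω' z v + Ψ v) Q z')
    (hdesc : f y' ≤ f x' + ⟪g, y' - x'⟫ + ℓ / 2 * ‖y' - x'‖ ^ 2)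
    (hstrong : 1 / 2 * ‖z' - z‖ ^ 2 ≤ bregman ω ω' z z') :
    (A + a) * (f y' + Ψ y' - (f u + Ψ u)) + bregman ω ω' z' u ≤
      A * (f y + Ψ y - (f u + Ψ u)) + bregman ω ω' z u := by
  have ha : 0 < a := pos_of_mul_pos_left (one_pos.trans_le haℓ) hℓ.le
  have hτ0 : 0 ≤ τ := by rw [hτ]; positivity
  have hτ1 : τ ≤ 1 := by rw [hτ, div_le_one (by positivity)]; exact haℓ
  have hx'Q : x' ∈ Q := by rw [hx']; exact hQ hz hy hτ0 (by linarith) (by ring)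
  have hy' := hy'min.gradient_step_le_comparison (f := f) hQ hΨ hτ0 hτ1 hx' hy hz' hdesc
  have hz'3 := hz'min.bregman_prox_three_point hQ hΨ hz' hu hω ha
  have hfu := hf.add_le_of_hasLineDerivAt hx'Q hu (hg.hasLineDerivAt _)
  have hfy := hf.add_le_of_hasLineDerivAt hx'Q hy (hg.hasLineDerivAt _)
  have hcouple : a * ⟪g, x' - z⟫ = A * ⟪g, y - x'⟫ := by
    rw [← inner_smul_right, ← inner_smul_right,
      smul_sub_eq_smul_sub_of_sq_mul_eq ha hℓ hquad hτ hx']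
  have hsplit : ⟪g, z' - z⟫ = ⟪g, z' - u⟫ + ⟪g, u - x'⟫ + ⟪g, x' - z⟫ := by
    rw [← inner_add_right, ← inner_add_right]; congr 1; abel
  have hτa : (A + a) * τ = a := by rw [hτ, ← hquad]; field_simp
  have hℓτ : (A + a) * (ℓ / 2 * τ ^ 2) = 1 / 2 := by rw [hτ, ← hquad]; field_simp
  linear_combination (A + a) * hy' + hz'3 + hstrong + a * hfu + A * hfy + hcouple
    + a * hsplit + (⟪g, z' - z⟫ + Ψ z' - Ψ y) * hτa + ‖z' - z‖ ^ 2 * hℓτ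

end Step

section Weights

variable {c ℓ a : ℝ}

theorem sq_mul_eq_add_of_eq_sqrt (hc : 0 ≤ c) (hℓ : 0 < ℓ)
    (ha : a = √(c / ℓ + 1 / (4 * ℓ ^ 2)) + 1 / (2 * ℓ)) : a ^ 2 * ℓ = c + a := by
  have hs : √(c / ℓ + 1 / (4 * ℓ ^ 2)) ^ 2 = c / ℓ + 1 / (4 * ℓ ^ 2) :=
    Real.sq_sqrt (by positivity)
  rw [ha]
  field_simp at hs ⊢
  linear_combination hs

theorem one_le_mul_of_eq_sqrt (hc : 0 ≤ c) (hℓ : 0 < ℓ)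
    (ha : a = √(c / ℓ + 1 / (4 * ℓ ^ 2)) + 1 / (2 * ℓ)) : 1 ≤ a * ℓ := by
  have ha0 : 0 < a := by rw [ha]; positivity
  have hquad := sq_mul_eq_add_of_eq_sqrt hc hℓ ha
  nlinarith

theorem add_one_sq_div_le_of_eq_sqrt {n M : ℝ} (hM : 0 < M) (hℓ : 0 < ℓ)
    (hℓM : ℓ ≤ 2 * M) (hc : n ^ 2 / (8 * M) ≤ c)
    (ha : a = √(c / ℓ + 1 / (4 * ℓ ^ 2)) + 1 / (2 * ℓ)) :
    (n + 1) ^ 2 / (8 * M) ≤ c + a := by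
  have hsqrt : n / (4 * M) ≤ √(c / ℓ + 1 / (4 * ℓ ^ 2)) := by
    apply Real.le_sqrt_of_sq_le
    calc (n / (4 * M)) ^ 2 = n ^ 2 / (8 * M) / (2 * M) := by field_simp; ring
      _ ≤ c / ℓ := div_le_div₀ ((by positivity : (0 : ℝ) ≤ _).trans hc) hc hℓ hℓM
      _ ≤ c / ℓ + 1 / (4 * ℓ ^ 2) := by simp only [le_add_iff_nonneg_right]; positivity
  have hinv : 1 / (4 * M) ≤ 1 / (2 * ℓ) :=
    one_div_le_one_div_of_le (by positivity) (by linarith)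
  calc (n + 1) ^ 2 / (8 * M) ≤ (n + 1) ^ 2 / (8 * M) + 1 / (8 * M) :=
        le_add_of_nonneg_right (by positivity)
    _ = n ^ 2 / (8 * M) + (n / (4 * M) + 1 / (4 * M)) := by field_simp; ring
    _ ≤ c + a := by rw [ha]; linarith

theorem sq_div_le_of_eq_sqrt {L α A : ℕ → ℝ} {M : ℝ} (hM : 0 < M) (hL : ∀ k, 0 < L k)
    (hLM : ∀ k, L (k + 1) ≤ 2 * M) (hA : ∀ k, A k = α k ^ 2 * L k)
    (hα : ∀ k, α (k + 1) = √(A k / L (k + 1) + 1 / (4 * L (k + 1) ^ 2)) + 1 / (2 * L (k + 1)))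
    (k : ℕ) : (k : ℝ) ^ 2 / (8 * M) ≤ A k := by
  have hAnn (k : ℕ) : 0 ≤ A k := by rw [hA k]; have := hL k; positivity
  induction k with
  | zero => simpa using hAnn 0
  | succ k ih =>
    rw [hA (k + 1), sq_mul_eq_add_of_eq_sqrt (hAnn k) (hL _) (hα k)]
    push_cast
    exact add_one_sq_div_le_of_eq_sqrt hM (hL _) (hLM k) ih (hα k)

end Weights

theorem stmt9_general
    {H : Type*} [NormedAddCommGroup H] [InnerProductSpace ℝ H] [CompleteSpace H]
    (Q : Set H) (hQconv : Convex ℝ Q)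
    (f Ψ ω : H → ℝ) (fgrad ωgrad : H → H)
    (hf : ∀ x, HasGradientAt f (fgrad x) x)
    (hω : ∀ x, HasGradientAt ω (ωgrad x) x)
    (hfconv : ConvexOn ℝ Q f) (hΨconv : ConvexOn ℝ Q Ψ)
    (hωstrong : ∀ a ∈ Q, ∀ b ∈ Q,
      ω a + ⟪ωgrad a, b - a⟫ + (1 / 2) * ‖b - a‖ ^ 2 ≤ ω b)
    (V : H → H → ℝ)
    (hV : ∀ a b, V a b = ω b - ω a - ⟪ωgrad a, b - a⟫)
    (φ : H → ℝ) (hφ : ∀ v, φ v = f v + Ψ v)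
    (L : ℕ → ℝ) (hL : ∀ k, 0 < L k)
    (α : ℕ → ℝ) (hα0 : α 0 = 0)
    (hαrec : ∀ k, α (k + 1) =
      Real.sqrt ((α k) ^ 2 * L k / L (k + 1) + 1 / (4 * (L (k + 1)) ^ 2))
        + 1 / (2 * L (k + 1)))
    (τ : ℕ → ℝ) (hτ : ∀ k, τ k = 1 / (α (k + 1) * L (k + 1)))
    (A : ℕ → ℝ) (hA : ∀ k, A k = (α k) ^ 2 * L k)
    (x y z : ℕ → H)
    (hx0 : x 0 ∈ Q) (hy0 : y 0 = x 0) (hz0 : z 0 = x 0)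
    (hxrec : ∀ k, x (k + 1) = τ k • z k + (1 - τ k) • y k)
    (hyQ : ∀ k, y (k + 1) ∈ Q)
    (hymin : ∀ k, ∀ v ∈ Q,
      ⟪fgrad (x (k + 1)), y (k + 1) - x (k + 1)⟫
          + (L (k + 1) / 2) * ‖y (k + 1) - x (k + 1)‖ ^ 2 + Ψ (y (k + 1)) ≤
        ⟪fgrad (x (k + 1)), v - x (k + 1)⟫
          + (L (k + 1) / 2) * ‖v - x (k + 1)‖ ^ 2 + Ψ v)
    (hzQ : ∀ k, z (k + 1) ∈ Q)
    (hzmin : ∀ k, ∀ v ∈ Q,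
      ⟪fgrad (x (k + 1)), z (k + 1) - z k⟫
          + (1 / α (k + 1)) * V (z k) (z (k + 1)) + Ψ (z (k + 1)) ≤
        ⟪fgrad (x (k + 1)), v - z k⟫ + (1 / α (k + 1)) * V (z k) v + Ψ v)
    (hdescent : ∀ k, f (y (k + 1)) ≤
      f (x (k + 1)) + ⟪fgrad (x (k + 1)), y (k + 1) - x (k + 1)⟫
        + (L (k + 1) / 2) * ‖y (k + 1) - x (k + 1)‖ ^ 2)
    (Lf : ℝ) (hLf : 0 < Lf) (hLbound : ∀ k, 1 ≤ k → L k ≤ 2 * Lf)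
    (xstar : H) (hxstarQ : xstar ∈ Q) (hxstarmin : ∀ v ∈ Q, φ xstar ≤ φ v)
    (T : ℕ) (hT : 1 ≤ T) :
    φ (y T) - φ xstar ≤ 4 * Lf * (2 * V (z 0) xstar) / (T : ℝ) ^ 2 := by
  obtain rfl : V = bregman ω ωgrad := funext fun a => funext (hV a)
  have hαA (k : ℕ) : α (k + 1) =
      √(A k / L (k + 1) + 1 / (4 * L (k + 1) ^ 2)) + 1 / (2 * L (k + 1)) := by
    rw [hA k]; exact hαrec k
  have hAnn (k : ℕ) : 0 ≤ A k := by rw [hA k]; have := hL k; positivity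
  have hquad (k : ℕ) : α (k + 1) ^ 2 * L (k + 1) = A k + α (k + 1) :=
    sq_mul_eq_add_of_eq_sqrt (hAnn k) (hL _) (hαA k)
  have hzQ' : ∀ k, z k ∈ Q := fun | 0 => hz0 ▸ hx0 | k + 1 => hzQ k
  have hyQ' : ∀ k, y k ∈ Q := fun | 0 => hy0 ▸ hx0 | k + 1 => hyQ k
  have hstrong : ∀ a ∈ Q, ∀ b ∈ Q, 1 / 2 * ‖b - a‖ ^ 2 ≤ bregman ω ωgrad a b :=
    fun a ha b hb => by unfold bregman; linarith [hωstrong a ha b hb]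
  have hΦ : Antitone fun k => A k * (φ (y k) - φ xstar) + bregman ω ωgrad (z k) xstar := by
    refine antitone_nat_of_succ_le fun k => ?_
    simp only [hA (k + 1), hquad k, hφ]
    exact potential_succ_le hQconv hfconv hΨconv (hL _) (hAnn k)
      (one_le_mul_of_eq_sqrt (hAnn k) (hL _) (hαA k)) (hquad k) (hτ k) (hxrec k) (hyQ' k)
      (hzQ' k) (hzQ k) hxstarQ (hf _) (hω _) (isMinOn_iff.2 (hymin k))
      (isMinOn_iff.2 (hzmin k)) (hdescent k) (hstrong _ (hzQ' k) _ (hzQ k))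
  have hbound : A T * (φ (y T) - φ xstar) ≤ bregman ω ωgrad (z 0) xstar := by
    have hΦT := hΦ (Nat.zero_le T)
    have hVT := (by positivity : (0 : ℝ) ≤ 1 / 2 * ‖xstar - z T‖ ^ 2).trans
      (hstrong _ (hzQ' T) _ hxstarQ)
    simp only [hA 0, hα0] at hΦT
    linarith
  have hgap : 0 ≤ φ (y T) - φ xstar := sub_nonneg.2 (hxstarmin _ (hyQ' T))
  have hT0 : (0 : ℝ) < T := by exact_mod_cast hT
  rw [le_div_iff₀ (by positivity)]
  calc (φ (y T) - φ xstar) * T ^ 2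
      = 8 * Lf * ((T : ℝ) ^ 2 / (8 * Lf) * (φ (y T) - φ xstar)) := by field_simp
    _ ≤ 8 * Lf * (A T * (φ (y T) - φ xstar)) := by
      gcongr
      exact sq_div_le_of_eq_sqrt hLf hL (fun k => hLbound _ (Nat.le_add_left 1 k)) hA hαA T
    _ ≤ 8 * Lf * bregman ω ωgrad (z 0) xstar := by gcongr
    _ = 4 * Lf * (2 * bregman ω ωgrad (z 0) xstar) := by ring

/-- Convergence rate of the adaptive accelerated composite gradient method:
if moreover `L_k ≤ 2 L_f` for all `k ≥ 1`, for some `L_f > 0`, and `x*` is a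
minimizer of `φ` over `Q`, then for every `T ≥ 1`,
`φ(y_T) − φ(x*) ≤ 4 L_f R² / T²`, where `R² := 2 V_{z_0}(x*)`. -/
theorem stmt9
    {H : Type*} [NormedAddCommGroup H] [InnerProductSpace ℝ H] [CompleteSpace H]
    (Q : Set H) (hQne : Q.Nonempty) (hQclosed : IsClosed Q) (hQconv : Convex ℝ Q)
    (f Ψ ω : H → ℝ) (fgrad ωgrad : H → H)
    (hf : ∀ x, HasGradientAt f (fgrad x) x)
    (hω : ∀ x, HasGradientAt ω (ωgrad x) x)
    (hfconv : ConvexOn ℝ Q f) (hΨconv : ConvexOn ℝ Q Ψ)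
    (hωstrong : ∀ a ∈ Q, ∀ b ∈ Q,
      ω a + ⟪ωgrad a, b - a⟫ + (1 / 2) * ‖b - a‖ ^ 2 ≤ ω b)
    (V : H → H → ℝ)
    (hV : ∀ a b, V a b = ω b - ω a - ⟪ωgrad a, b - a⟫)
    (φ : H → ℝ) (hφ : ∀ v, φ v = f v + Ψ v)
    (L : ℕ → ℝ) (hL : ∀ k, 0 < L k)
    (α : ℕ → ℝ) (hα0 : α 0 = 0)
    (hαrec : ∀ k, α (k + 1) =
      Real.sqrt ((α k) ^ 2 * L k / L (k + 1) + 1 / (4 * (L (k + 1)) ^ 2))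
        + 1 / (2 * L (k + 1)))
    (τ : ℕ → ℝ) (hτ : ∀ k, τ k = 1 / (α (k + 1) * L (k + 1)))
    (A : ℕ → ℝ) (hA : ∀ k, A k = (α k) ^ 2 * L k)
    (x y z : ℕ → H)
    (hx0 : x 0 ∈ Q) (hy0 : y 0 = x 0) (hz0 : z 0 = x 0)
    (hxrec : ∀ k, x (k + 1) = τ k • z k + (1 - τ k) • y k)
    (hyQ : ∀ k, y (k + 1) ∈ Q)
    (hymin : ∀ k, ∀ v ∈ Q,
      ⟪fgrad (x (k + 1)), y (k + 1) - x (k + 1)⟫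
          + (L (k + 1) / 2) * ‖y (k + 1) - x (k + 1)‖ ^ 2 + Ψ (y (k + 1)) ≤
        ⟪fgrad (x (k + 1)), v - x (k + 1)⟫
          + (L (k + 1) / 2) * ‖v - x (k + 1)‖ ^ 2 + Ψ v)
    (hzQ : ∀ k, z (k + 1) ∈ Q)
    (hzmin : ∀ k, ∀ v ∈ Q,
      ⟪fgrad (x (k + 1)), z (k + 1) - z k⟫
          + (1 / α (k + 1)) * V (z k) (z (k + 1)) + Ψ (z (k + 1)) ≤
        ⟪fgrad (x (k + 1)), v - z k⟫ + (1 / α (k + 1)) * V (z k) v + Ψ v)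
    (hdescent : ∀ k, f (y (k + 1)) ≤
      f (x (k + 1)) + ⟪fgrad (x (k + 1)), y (k + 1) - x (k + 1)⟫
        + (L (k + 1) / 2) * ‖y (k + 1) - x (k + 1)‖ ^ 2)
    (Lf : ℝ) (hLf : 0 < Lf) (hLbound : ∀ k, 1 ≤ k → L k ≤ 2 * Lf)
    (xstar : H) (hxstarQ : xstar ∈ Q) (hxstarmin : ∀ v ∈ Q, φ xstar ≤ φ v)
    (T : ℕ) (hT : 1 ≤ T) :
    φ (y T) - φ xstar ≤ 4 * Lf * (2 * V (z 0) xstar) / (T : ℝ) ^ 2 :=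
  stmt9_general Q hQconv f Ψ ω fgrad ωgrad hf hω hfconv hΨconv hωstrong V hV φ hφ L hL α hα0 hαrec τ
    hτ A hA x y z hx0 hy0 hz0 hxrec hyQ hymin hzQ hzmin hdescent Lf hLf hLbound xstar hxstarQ
    hxstarmin T hT
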